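/- Let m, n be rational with (m−n)² ≠ 4, and set p = 4(m+n), q = (m−n)² − 4, t = ½(m−n)p + q, u = ½(m−n)p − q. Then p² + q² + 2mpq = t² and p² + q² + 2npq = u². -/
import Mathlib

theorem euler_sec8 (m n : ℚ) (h : (m - n) ^ 2 ≠ 4) :
    let p := 4 * (m + n)
    let q := (m - n) ^ 2 - 4
    let t := (1 / 2) * (m - n) * p + q
    let u := (1 / 2) * (m - n) * p - q
    p ^ 2 + q ^ 2 + 2 * m * p * q = t ^ 2 ∧
    p ^ 2 + q ^ 2 + 2 * n * p * q = u ^ 2 := by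
  constructor <;> ring
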